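/- Let A ⊆ B(G_μ) and B ⊆ B(G_ν) be von Neumann algebras with cyclic and separating unit vectors Λ_μ and Λ_ν defining faithful normal states μ(a) = ⟨Λ_μ, aΛ_μ⟩ and ν(b) = ⟨Λ_ν, bΛ_ν⟩, and let ω be a coupling of (A, μ) and (B, ν) with cyclic representation (H_ω, π_ω, Ω_ω). Let H_ν be the closure of π_ω(1 ⊗ B′)Ω_ω in H_ω, P_ν the orthogonal projection of H_ω onto H_ν, ι : H_ν → H_ω the inclusion, and u_ν : G_ν → H_ν the unitary determined by u_ν b′Λ_ν = π_ω(1 ⊗ b′)Ω_ω for b′ ∈ B′. Then for every a ∈ A, the operator u_ν* ι* π_ω(a ⊗ 1) ι u_ν = u_ν* P_ν π_ω(a ⊗ 1) u_ν on G_ν belongs to the von Neumann algebra B. -/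

import Mathlib

/-!
Since `Λν` is separating for `B`, it is cyclic for `B′`: the projection onto the closure of
`B′Λν` commutes with `B′`, hence lies in `B″ = B`, and it fixes `Λν`, so it is `1`.
Therefore the relation `u_ν b′ = π_ω(1 ⊗ b′) u_ν`, which holds on the vectors `c′Λν`, holds
everywhere, and taking adjoints of it for `b′*` gives `u_ν* π_ω(1 ⊗ b′) = b′ u_ν*`. As
`π_ω(a ⊗ 1)` commutes with `π_ω(1 ⊗ b′)`, the compression `u_ν* π_ω(a ⊗ 1) u_ν` commutes with
every `b′ ∈ B′`, so it lies in `B″ = B`.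
-/

open scoped ComplexOrder

noncomputable section

noncomputable instance {H : Type} [NormedAddCommGroup H] [InnerProductSpace ℂ H]
    [CompleteSpace H] (A : VonNeumannAlgebra H) : Algebra ℂ ↥A :=
  inferInstanceAs (Algebra ℂ ↥A.toStarSubalgebra)

variable {Gμ Gν Hw : Type}
  [NormedAddCommGroup Gμ] [InnerProductSpace ℂ Gμ] [CompleteSpace Gμ]
  [NormedAddCommGroup Gν] [InnerProductSpace ℂ Gν] [CompleteSpace Gν]
  [NormedAddCommGroup Hw] [InnerProductSpace ℂ Hw] [CompleteSpace Hw]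

/-- A coupling of `(A, μ)` and `(B, ν)`: a state on the algebraic tensor product `A ⊙ B′`
(equivalently, a bilinear functional, positive on elements of the form `x* x`) whose
marginals are `μ` and `ν′`. -/
def IsCoupling (A : VonNeumannAlgebra Gμ) (B : VonNeumannAlgebra Gν) (Λμ : Gμ) (Λν : Gν)
    (ω : ↥A →ₗ[ℂ] ↥B.commutant →ₗ[ℂ] ℂ) : Prop :=
  (∀ (n : ℕ) (a : Fin n → ↥A) (b : Fin n → ↥B.commutant),
      0 ≤ ∑ i, ∑ j, ω (star (a i) * a j) (star (b i) * b j)) ∧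
  (∀ a : ↥A, ω a 1 = inner ℂ Λμ ((a : Gμ →L[ℂ] Gμ) Λμ)) ∧
  (∀ b' : ↥B.commutant, ω 1 b' = inner ℂ Λν ((b' : Gν →L[ℂ] Gν) Λν))

namespace VonNeumannAlgebra

variable {G H : Type} [NormedAddCommGroup G] [InnerProductSpace ℂ G] [CompleteSpace G]
  [NormedAddCommGroup H] [InnerProductSpace ℂ H]

open ContinuousLinearMap

def orbit (S : VonNeumannAlgebra G) (ξ : G) : Submodule ℂ G :=
  (Subalgebra.toSubmodule S.toStarSubalgebra.toSubalgebra).map (apply ℂ G ξ).toLinearMap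

theorem mem_orbit_self (S : VonNeumannAlgebra G) (ξ : G) : ξ ∈ S.orbit ξ :=
  ⟨1, one_mem S, rfl⟩

theorem orbit_mem_invtSubmodule {S : VonNeumannAlgebra G} {s : G →L[ℂ] G} (hs : s ∈ S)
    (ξ : G) :
    S.orbit ξ ∈ Module.End.invtSubmodule (s : G →ₗ[ℂ] G) := by
  rintro _ ⟨t, ht, rfl⟩
  exact ⟨s * t, show s * t ∈ S from mul_mem hs ht, rfl⟩

theorem orbit_commutant_topologicalClosure_eq_top {B : VonNeumannAlgebra G} {ξ : G}
    (hξ : ∀ b : B, (b : G →L[ℂ] G) ξ = 0 → b = 0) :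
    (B.commutant.orbit ξ).topologicalClosure = ⊤ := by
  set K := (B.commutant.orbit ξ).topologicalClosure
  have hPB : K.starProjection ∈ B := by
    rw [IsStarProjection.mem_iff isStarProjection_starProjection B, K.range_starProjection]
    exact fun y hy =>
      Submodule.topologicalClosure_mem_invtSubmodule (orbit_mem_invtSubmodule hy ξ)
  have hP : K.starProjection = 1 := by
    have hξK : K.starProjection ξ = ξ := K.starProjection_eq_self_iff.mpr <|
      (B.commutant.orbit ξ).le_topologicalClosure (B.commutant.mem_orbit_self ξ)
    have h := hξ ⟨1 - K.starProjection, sub_mem (one_mem B) hPB⟩ (by simp [hξK])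
    exact (sub_eq_zero.mp congr(Subtype.val $h)).symm
  rw [← K.range_starProjection, hP]
  exact LinearMap.range_id

section Intertwining

variable {S : VonNeumannAlgebra G} {F : Type} [FunLike F S (H →L[ℂ] H)]

theorem comp_eq_comp_of_apply_orbit [MulHomClass F S (H →L[ℂ] H)] (π : F) {ξ : G} {Ω : H}
    (hξ : (S.orbit ξ).topologicalClosure = ⊤) {T : G →L[ℂ] H}
    (hT : ∀ s : S, T ((s : G →L[ℂ] G) ξ) = π s Ω) (s : S) :
    T ∘L (s : G →L[ℂ] G) = π s ∘L T := by
  refine ContinuousLinearMap.ext_on (s := S.orbit ξ) ?_ ?_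
  · rwa [Submodule.span_eq, Submodule.dense_iff_topologicalClosure_eq_top]
  · rintro _ ⟨t, ht, rfl⟩
    simpa [← hT ⟨t, ht⟩] using hT (s * ⟨t, ht⟩)

variable [CompleteSpace H]

theorem adjoint_comp_eq_comp_adjoint [StarHomClass F S (H →L[ℂ] H)] (π : F) {T : G →L[ℂ] H}
    (hT : ∀ s : S, T ∘L (s : G →L[ℂ] G) = π s ∘L T) (s : S) :
    adjoint T ∘L π s = (s : G →L[ℂ] G) ∘L adjoint T := by
  simpa [adjoint_comp, ← star_eq_adjoint, map_star] using congr(adjoint $(hT (star s))).symm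

end Intertwining

theorem adjoint_comp_comp_mem [CompleteSpace H] {B : VonNeumannAlgebra G} {F : Type}
    [FunLike F B.commutant (H →L[ℂ] H)] [StarHomClass F B.commutant (H →L[ℂ] H)] (π : F)
    {T : G →L[ℂ] H} (hT : ∀ b : B.commutant, T ∘L (b : G →L[ℂ] G) = π b ∘L T)
    {x : H →L[ℂ] H} (hx : ∀ b : B.commutant, Commute x (π b)) :
    adjoint T ∘L (x ∘L T) ∈ B := by
  rw [← B.commutant_commutant, mem_commutant_iff]
  intro b hb
  set b' : B.commutant := ⟨b, hb⟩
  calc b * (adjoint T ∘L (x ∘L T))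
      = (adjoint T ∘L π b') ∘L (x ∘L T) := by rw [adjoint_comp_eq_comp_adjoint π hT]; rfl
    _ = adjoint T ∘L ((x * π b') ∘L T) := by rw [(hx b').eq]; rfl
    _ = adjoint T ∘L (x ∘L (T ∘L b)) := by rw [hT b']; rfl
    _ = (adjoint T ∘L (x ∘L T)) * b := rfl

end VonNeumannAlgebra

theorem compression_mem_general
    (A : VonNeumannAlgebra Gμ) (B : VonNeumannAlgebra Gν) (Λν : Gν)
    (hΛνsep : ∀ b : ↥B, (b : Gν →L[ℂ] Gν) Λν = 0 → b = 0)
    -- a cyclic representation of `(A ⊙ B′, ω)`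
    (π₁ : ↥A →⋆ₐ[ℂ] (Hw →L[ℂ] Hw)) (π₂ : ↥B.commutant →⋆ₐ[ℂ] (Hw →L[ℂ] Hw)) (Ωw : Hw)
    (hcomm : ∀ (a : ↥A) (b' : ↥B.commutant), Commute (π₁ a) (π₂ b'))
    -- the unitary `u_ν : G_ν → H_ν ⊆ H_ω`
    (uν : Gν →L[ℂ] Hw)
    (huν : ∀ b' : ↥B.commutant, uν ((b' : Gν →L[ℂ] Gν) Λν) = π₂ b' Ωw) :
    ∀ a : ↥A,
      (ContinuousLinearMap.adjoint uν).comp ((π₁ a).comp uν) ∈ B := by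
  have hcyclic := VonNeumannAlgebra.orbit_commutant_topologicalClosure_eq_top hΛνsep
  have hintertwine := VonNeumannAlgebra.comp_eq_comp_of_apply_orbit π₂ hcyclic huν
  exact fun a => VonNeumannAlgebra.adjoint_comp_comp_mem π₂ hintertwine (hcomm a)

/-- With `(H_ω, π_ω, Ω_ω)` a cyclic representation of `(A ⊙ B′, ω)`
(given by the pair of commuting unital *-homomorphisms `π₁ = π_ω(· ⊗ 1)` and
`π₂ = π_ω(1 ⊗ ·)`), `H_ν` the closure of `π_ω(1 ⊗ B′)Ω_ω`, and `u_ν : G_ν → H_ν` the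
unitary with `u_ν b′Λ_ν = π_ω(1 ⊗ b′)Ω_ω`, the compression
`u_ν* ι* π_ω(a ⊗ 1) ι u_ν = u_ν* P_ν π_ω(a ⊗ 1) u_ν` belongs to `B` for every `a ∈ A`. -/
theorem compression_mem
    (A : VonNeumannAlgebra Gμ) (B : VonNeumannAlgebra Gν) (Λμ : Gμ) (Λν : Gν)
    (hΛμunit : ‖Λμ‖ = 1) (hΛνunit : ‖Λν‖ = 1)
    (hΛμcyc : Dense (Set.range fun a : ↥A => (a : Gμ →L[ℂ] Gμ) Λμ))
    (hΛμsep : ∀ a : ↥A, (a : Gμ →L[ℂ] Gμ) Λμ = 0 → a = 0)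
    (hΛνcyc : Dense (Set.range fun b : ↥B => (b : Gν →L[ℂ] Gν) Λν))
    (hΛνsep : ∀ b : ↥B, (b : Gν →L[ℂ] Gν) Λν = 0 → b = 0)
    (ω : ↥A →ₗ[ℂ] ↥B.commutant →ₗ[ℂ] ℂ) (hω : IsCoupling A B Λμ Λν ω)
    -- a cyclic representation of `(A ⊙ B′, ω)`
    (π₁ : ↥A →⋆ₐ[ℂ] (Hw →L[ℂ] Hw)) (π₂ : ↥B.commutant →⋆ₐ[ℂ] (Hw →L[ℂ] Hw)) (Ωw : Hw)
    (hcomm : ∀ (a : ↥A) (b' : ↥B.commutant), Commute (π₁ a) (π₂ b'))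
    (hcyc : Dense (Submodule.span ℂ
      (Set.range fun p : ↥A × ↥B.commutant => π₁ p.1 (π₂ p.2 Ωw)) : Set Hw))
    (hrep : ∀ (a : ↥A) (b' : ↥B.commutant), ω a b' = inner ℂ Ωw (π₁ a (π₂ b' Ωw)))
    -- the unitary `u_ν : G_ν → H_ν ⊆ H_ω`
    (uν : Gν →L[ℂ] Hw) (huνiso : ∀ ξ : Gν, ‖uν ξ‖ = ‖ξ‖)
    (huν : ∀ b' : ↥B.commutant, uν ((b' : Gν →L[ℂ] Gν) Λν) = π₂ b' Ωw)
    (huνrange : Set.range uν = closure (Set.range fun b' : ↥B.commutant => π₂ b' Ωw)) :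
    ∀ a : ↥A,
      (ContinuousLinearMap.adjoint uν).comp ((π₁ a).comp uν) ∈ B :=
  compression_mem_general A B Λν hΛνsep π₁ π₂ Ωw hcomm uν huν
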